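/- Let m ≥ 2 and let S be a LexOpt schedule of jobs with processing times p_1,…,p_n > 0 on m identical machines. Let f_r, f_a ≥ 1 be reals, let k_r, k_a, δ be integers with 0 ≤ k_r < m, k_a ≥ 0, δ ≥ 0, and let p̂ be a perturbed processing-time vector with p̂_j ≥ 0 for all j such that: the number of jobs with p̂_j < p_j/f_r is at most k_r, and the number of jobs with p̂_j > f_a·p_j is at most k_a. Consider the schedule on m+δ machines that assigns every job to the same machine as S and leaves the δ new machines empty. Then its makespan under p̂ is at most 2·f_r·(1 + ⌈k_r/(m−k_r)⌉)·(f_a + k_a)·(1 + ⌈δ/m⌉)·C*_max(m+δ, p̂). -/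

import Mathlib

open Finset

/-- Completion time (load) of machine `i` under schedule `σ` and processing times `p`. -/
noncomputable def mLoad {n m : ℕ} (p : Fin n → ℝ) (σ : Fin n → Fin m) (i : Fin m) : ℝ :=
  ∑ j ∈ Finset.univ.filter (fun j => σ j = i), p j

/-- Makespan of schedule `σ`: the maximum machine completion time. -/
noncomputable def makespan {n m : ℕ} (p : Fin n → ℝ) (σ : Fin n → Fin m) : ℝ :=
  ⨆ i, mLoad p σ i

/-- Minimum makespan of the jobs with processing times `p` on `m` machines. -/
noncomputable def optMakespan {n : ℕ} (m : ℕ) (p : Fin n → ℝ) : ℝ :=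
  ⨅ σ : Fin n → Fin m, makespan p σ

/-- The completion-time vector sorted in non-increasing order. -/
noncomputable def sortedDesc {m : ℕ} (C : Fin m → ℝ) : Fin m → ℝ :=
  fun i => C (Tuple.sort C i.rev)

/-- A schedule is LexOpt if its non-increasingly sorted completion-time vector is
lexicographically at most that of every other schedule. -/
def IsLexOpt {n m : ℕ} (p : Fin n → ℝ) (σ : Fin n → Fin m) : Prop :=
  ∀ σ' : Fin n → Fin m, toLex (sortedDesc (mLoad p σ)) ≤ toLex (sortedDesc (mLoad p σ'))

/-!
If a machine of a LexOpt schedule carries at least two jobs, moving its smallest job `j` to a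
machine `i'` must not improve the sorted load vector, so its load is at most
`C_{i'} + p_j ≤ C_{i'} + C_i / 2`, i.e. at most twice any other load. Compare with the least
loaded of the `≥ m - k_r` machines that carry no reduced job: on those machines `p ≤ f_r p̂`, so
its load is at most `f_r Σ p̂ / (m - k_r) ≤ f_r (m + δ) C*_max / (m - k_r)`, and
`m + δ ≤ (1 + ⌈k_r/(m - k_r)⌉)(1 + ⌈δ/m⌉)(m - k_r)`. Passing to `p̂` costs the factor `f_a` on
the non-augmented jobs and at most `k_a` jobs of size `≤ C*_max` on each machine. A machine with
a single job has load at most `C*_max`.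
-/

section SortedLoads

variable {m : ℕ}

noncomputable def countGE (C : Fin m → ℝ) (x : ℝ) : ℕ :=
  #{k | x ≤ C k}

lemma countGE_le (C : Fin m → ℝ) (x : ℝ) : countGE C x ≤ m :=
  (card_filter_le _ _).trans_eq (card_fin m)

lemma countGE_sortedDesc (C : Fin m → ℝ) (x : ℝ) : countGE (sortedDesc C) x = countGE C x := by
  simp only [countGE, card_filter]
  exact Equiv.sum_comp (Fin.revPerm.trans (Tuple.sort C)) fun k => if x ≤ C k then 1 else 0

lemma sortedDesc_antitone (C : Fin m → ℝ) : Antitone (sortedDesc C) :=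
  fun _ _ hab => Tuple.monotone_sort C (Fin.rev_le_rev.mpr hab)

lemma le_sortedDesc_iff (C : Fin m → ℝ) (d : Fin m) (x : ℝ) :
    x ≤ sortedDesc C d ↔ (d : ℕ) < countGE C x := by
  rw [← countGE_sortedDesc, countGE]
  constructor
  · intro h
    have hsub : Iic d ⊆ ({k | x ≤ sortedDesc C k} : Finset _) := fun k hk =>
      mem_filter.mpr ⟨mem_univ k, h.trans (sortedDesc_antitone C (mem_Iic.mp hk))⟩
    simpa using card_le_card hsub
  · intro h
    by_contra! hx
    have hsub : ({k | x ≤ sortedDesc C k} : Finset _) ⊆ Iio d := fun k hk => by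
      simp only [mem_filter, mem_univ, true_and] at hk
      by_contra! hkd
      exact (hk.trans (sortedDesc_antitone C (not_lt.mp (mem_Iio.not.mp hkd)))).not_gt hx
    simpa using (card_le_card hsub).trans_lt' h

lemma toLex_sortedDesc_lt_of_countGE {C C' : Fin m → ℝ} (a : ℝ)
    (hgt : ∀ x, a < x → countGE C' x = countGE C x) (hlt : countGE C' a < countGE C a) :
    toLex (sortedDesc C') < toLex (sortedDesc C) := by
  set e := countGE C' a
  have he : e < m := hlt.trans_le (countGE_le C a)
  have hagree : ∀ d : Fin m, (d : ℕ) < e → ∀ y, a ≤ y →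
      (y ≤ sortedDesc C' d ↔ y ≤ sortedDesc C d) := by
    intro d hd y hy
    rw [le_sortedDesc_iff, le_sortedDesc_iff]
    rcases hy.eq_or_lt with rfl | hy
    · exact iff_of_true hd (hd.trans hlt)
    · rw [hgt y hy]
  refine ⟨⟨e, he⟩, fun d hd => ?_, ?_⟩
  · have hd : (d : ℕ) < e := hd
    have ha' : a ≤ sortedDesc C' d := (le_sortedDesc_iff C' d a).mpr hd
    have ha : a ≤ sortedDesc C d := (hagree d hd a le_rfl).mp ha'
    exact le_antisymm ((hagree d hd _ ha').mp le_rfl) ((hagree d hd _ ha).mpr le_rfl)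
  · calc sortedDesc C' ⟨e, he⟩ < a := not_le.mp fun h => (le_sortedDesc_iff C' _ a).mp h |>.false
      _ ≤ sortedDesc C ⟨e, he⟩ := (le_sortedDesc_iff C _ a).mpr hlt

lemma toLex_sortedDesc_lt_of_lower {C C' : Fin m → ℝ} {i i' : Fin m}
    (hi : C' i < C i) (hi' : C' i' < C i) (hC : C i' < C i)
    (hother : ∀ k, k ≠ i → k ≠ i' → C' k = C k) :
    toLex (sortedDesc C') < toLex (sortedDesc C) := by
  have hC' : ∀ k, C i ≤ C' k → C' k = C k := fun k hk =>
    hother k (by rintro rfl; exact hk.not_gt hi) (by rintro rfl; exact hk.not_gt hi')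
  refine toLex_sortedDesc_lt_of_countGE (C i) (fun x hx => ?_) ?_
  · have hCx : ∀ k, x ≤ C k → C' k = C k := fun k hk =>
      hother k (by rintro rfl; exact hk.not_gt hx) (by rintro rfl; exact hk.not_gt (hC.trans hx))
    unfold countGE
    congr 1
    ext k
    simp only [mem_filter, mem_univ, true_and]
    exact ⟨fun h => by rwa [← hC' k (hx.le.trans h)], fun h => by rwa [hCx k h]⟩
  · have hsub : ({k | C i ≤ C' k} : Finset _) ⊆ ({k | C i ≤ C k} : Finset _) := fun k hk => by
      simp only [mem_filter, mem_univ, true_and] at hk ⊢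
      rwa [← hC' k hk]
    refine card_lt_card ((ssubset_iff_of_subset hsub).mpr ⟨i, ?_, ?_⟩) <;> simp [hi]

end SortedLoads

section Loads

variable {n m : ℕ}

lemma mLoad_update (p : Fin n → ℝ) (σ : Fin n → Fin m) (j : Fin n) (i' k : Fin m) :
    mLoad p (Function.update σ j i') k =
      mLoad p σ k - (if σ j = k then p j else 0) + (if i' = k then p j else 0) := by
  simp only [mLoad, sum_filter]
  rw [← add_sum_erase _ _ (mem_univ j), ← add_sum_erase _ _ (mem_univ j),
    sum_congr rfl fun j' hj' => by rw [Function.update_of_ne (ne_of_mem_erase hj')],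
    Function.update_self]
  ring

lemma mLoad_nonneg {p : Fin n → ℝ} (hp : ∀ j, 0 ≤ p j) (σ : Fin n → Fin m) (i : Fin m) :
    0 ≤ mLoad p σ i :=
  sum_nonneg fun j _ => hp j

lemma sum_mLoad (p : Fin n → ℝ) (σ : Fin n → Fin m) : ∑ i, mLoad p σ i = ∑ j, p j :=
  sum_fiberwise univ σ p

lemma mLoad_le_makespan (p : Fin n → ℝ) (σ : Fin n → Fin m) (i : Fin m) :
    mLoad p σ i ≤ makespan p σ :=
  le_ciSup (Set.finite_range _).bddAbove i

lemma mLoad_comp_apply {m' : ℕ} (p : Fin n → ℝ) (σ : Fin n → Fin m) {e : Fin m → Fin m'}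
    (he : e.Injective) (i : Fin m) : mLoad p (e ∘ σ) (e i) = mLoad p σ i := by
  simp only [mLoad, Function.comp_apply, he.eq_iff]

lemma mLoad_comp_of_notMem_range {m' : ℕ} (p : Fin n → ℝ) (σ : Fin n → Fin m)
    {e : Fin m → Fin m'} {k : Fin m'} (hk : k ∉ Set.range e) : mLoad p (e ∘ σ) k = 0 :=
  sum_eq_zero fun j hj => absurd ⟨σ j, (mem_filter.mp hj).2⟩ hk

lemma makespan_castAdd_le {p : Fin n → ℝ} {σ : Fin n → Fin m} (δ : ℕ) {B : ℝ} (hB : 0 ≤ B)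
    (h : ∀ i, mLoad p σ i ≤ B) : makespan p (fun j => Fin.castAdd δ (σ j)) ≤ B := by
  refine Real.iSup_le (fun k => Fin.addCases (fun i => ?_) (fun i => ?_) k) hB
  · exact (mLoad_comp_apply p σ (Fin.castAdd_injective m δ) i).trans_le (h i)
  · rw [show (fun j => Fin.castAdd δ (σ j)) = Fin.castAdd δ ∘ σ from rfl,
      mLoad_comp_of_notMem_range p σ fun ⟨x, hx⟩ => by
        have := congrArg Fin.val hx; simp only [Fin.val_castAdd, Fin.val_natAdd] at this; omega]
    exact hB

lemma mLoad_le_of_card_le_one {p : Fin n → ℝ} {σ : Fin n → Fin m} {i : Fin m}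
    (hi : #{j | σ j = i} ≤ 1) {B : ℝ} (hB : 0 ≤ B) (hpB : ∀ j, p j ≤ B) : mLoad p σ i ≤ B :=
  calc mLoad p σ i ≤ #{j | σ j = i} • B := sum_le_card_nsmul _ _ _ fun j _ => hpB j
    _ ≤ 1 • B := by rw [nsmul_eq_mul, nsmul_eq_mul]; gcongr
    _ = B := one_nsmul B

lemma mLoad_le_of_card_augmented_le {p phat : Fin n → ℝ} (hp : ∀ j, 0 ≤ p j) {fa : ℝ}
    (hfa : 0 ≤ fa) {ka : ℕ} (ha : #{j | fa * p j < phat j} ≤ ka) {B : ℝ} (hB : 0 ≤ B)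
    (hphatB : ∀ j, phat j ≤ B) (σ : Fin n → Fin m) (i : Fin m) :
    mLoad phat σ i ≤ ka * B + fa * mLoad p σ i := by
  set J : Finset (Fin n) := {j | σ j = i}
  set A : Finset (Fin n) := {j | fa * p j < phat j}
  have haug : ∑ j ∈ J with j ∈ A, phat j ≤ ka * B :=
    calc ∑ j ∈ J with j ∈ A, phat j ≤ #{j ∈ J | j ∈ A} • B :=
          sum_le_card_nsmul _ _ _ fun j _ => hphatB j
      _ ≤ ka * B := by
          rw [nsmul_eq_mul]
          gcongr
          exact_mod_cast (card_le_card fun j hj => (mem_filter.mp hj).2).trans ha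
  have hrest : ∑ j ∈ J with j ∉ A, phat j ≤ fa * mLoad p σ i :=
    calc ∑ j ∈ J with j ∉ A, phat j ≤ ∑ j ∈ J with j ∉ A, fa * p j :=
          sum_le_sum fun j hj => by simpa [A] using (mem_filter.mp hj).2
      _ ≤ ∑ j ∈ J, fa * p j :=
          sum_le_sum_of_subset_of_nonneg (filter_subset _ _) fun j _ _ => mul_nonneg hfa (hp j)
      _ = fa * mLoad p σ i := (mul_sum _ _ _).symm
  rw [mLoad, ← sum_filter_add_sum_filter_not J (· ∈ A)]
  linarith

lemma exists_mul_mLoad_le_sum {p phat : Fin n → ℝ} (hp : ∀ j, 0 ≤ p j) (hphat : ∀ j, 0 ≤ phat j)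
    {fr : ℝ} (hfr : 0 < fr) {kr : ℕ} (hkr : kr < m) (hr : #{j | phat j < p j / fr} ≤ kr)
    (σ : Fin n → Fin m) : ∃ c, ((m : ℝ) - kr) * mLoad p σ c ≤ fr * ∑ j, phat j := by
  set R : Finset (Fin n) := {j | phat j < p j / fr}
  set clean : Finset (Fin m) := (R.image σ)ᶜ
  have hclean : m - kr ≤ #clean := by
    rw [card_compl, Fintype.card_fin]
    have := (card_image_le (s := R) (f := σ)).trans hr
    omega
  obtain ⟨c, -, hmin⟩ := exists_min_image clean (mLoad p σ) (card_pos.mp (by omega))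
  refine ⟨c, ?_⟩
  have hstable : ∀ j, σ j ∈ clean → p j ≤ fr * phat j := fun j hj => by
    have hjR : j ∉ R := fun hjR => mem_compl.mp hj (mem_image_of_mem σ hjR)
    simp only [R, mem_filter, mem_univ, true_and, not_lt, div_le_iff₀ hfr] at hjR
    linarith
  calc ((m : ℝ) - kr) * mLoad p σ c ≤ #clean * mLoad p σ c := by
        gcongr
        · exact mLoad_nonneg hp σ c
        · rw [sub_le_iff_le_add]
          exact_mod_cast (Nat.sub_le_iff_le_add.mp hclean)
    _ ≤ ∑ i ∈ clean, mLoad p σ i := by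
        rw [← nsmul_eq_mul]
        exact card_nsmul_le_sum _ _ _ hmin
    _ = ∑ j with σ j ∈ clean, p j := sum_fiberwise_eq_sum_filter _ _ _ _
    _ ≤ ∑ j with σ j ∈ clean, fr * phat j :=
        sum_le_sum fun j hj => hstable j (mem_filter.mp hj).2
    _ ≤ ∑ j, fr * phat j :=
        sum_le_sum_of_subset_of_nonneg (filter_subset _ _) fun j _ _ => by
          have := hphat j
          positivity
    _ = fr * ∑ j, phat j := (mul_sum _ _ _).symm

end Loads

section Optimum

variable {n m : ℕ} [NeZero m] {p : Fin n → ℝ}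

lemma makespan_nonneg (hp : ∀ j, 0 ≤ p j) (σ : Fin n → Fin m) : 0 ≤ makespan p σ :=
  (mLoad_nonneg hp σ 0).trans (mLoad_le_makespan p σ 0)

lemma optMakespan_nonneg (hp : ∀ j, 0 ≤ p j) : 0 ≤ optMakespan m p :=
  le_ciInf (makespan_nonneg hp)

lemma le_optMakespan (hp : ∀ j, 0 ≤ p j) (j : Fin n) : p j ≤ optMakespan m p :=
  le_ciInf fun σ =>
    (show p j ≤ mLoad p σ (σ j) from single_le_sum (fun k _ => hp k) (by simp)).trans
      (mLoad_le_makespan p σ (σ j))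

lemma sum_le_mul_optMakespan (p : Fin n → ℝ) : ∑ j, p j ≤ m * optMakespan m p := by
  rw [optMakespan, Real.mul_iInf_of_nonneg (Nat.cast_nonneg m)]
  refine le_ciInf fun σ => ?_
  calc ∑ j, p j = ∑ i, mLoad p σ i := (sum_mLoad p σ).symm
    _ ≤ ∑ _i : Fin m, makespan p σ := sum_le_sum fun i _ => mLoad_le_makespan p σ i
    _ = m * makespan p σ := by simp

end Optimum

namespace IsLexOpt

variable {n m : ℕ} {p : Fin n → ℝ} {σ : Fin n → Fin m}

lemma mLoad_le_mLoad_add (hσ : IsLexOpt p σ) (hp : ∀ j, 0 < p j) (j : Fin n) (i' : Fin m) :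
    mLoad p σ (σ j) ≤ mLoad p σ i' + p j := by
  by_contra! hlt
  have hne : i' ≠ σ j := by
    rintro rfl
    linarith [hp j]
  have hmove := toLex_sortedDesc_lt_of_lower (C := mLoad p σ)
    (C' := mLoad p (Function.update σ j i')) (i := σ j) (i' := i')
    (by simp [mLoad_update, hne, hp j]) (by simpa [mLoad_update, hne.symm] using hlt)
    (by linarith [hp j]) (fun k hk hk' => by simp [mLoad_update, Ne.symm hk, Ne.symm hk'])
  exact (hσ _).not_gt hmove

lemma mLoad_le_two_mul (hσ : IsLexOpt p σ) (hp : ∀ j, 0 < p j) {i : Fin m}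
    (hi : 2 ≤ #{j | σ j = i}) (i' : Fin m) : mLoad p σ i ≤ 2 * mLoad p σ i' := by
  obtain ⟨j, hj, hmin⟩ := exists_min_image {j | σ j = i} p (card_pos.mp (by omega))
  have hσj : σ j = i := (mem_filter.mp hj).2
  have hsmall : 2 * p j ≤ mLoad p σ i :=
    calc 2 * p j ≤ #{j | σ j = i} • p j := by
          rw [nsmul_eq_mul]
          gcongr
          · exact (hp j).le
          · exact_mod_cast hi
      _ ≤ mLoad p σ i := card_nsmul_le_sum _ _ _ hmin
  have := hσ.mLoad_le_mLoad_add hp j i'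
  rw [hσj] at this
  linarith

lemma mLoad_le_of_two_mul_mLoad_le (hσ : IsLexOpt p σ) (hp : ∀ j, 0 < p j) {phat : Fin n → ℝ}
    {fa : ℝ} (hfa : 1 ≤ fa) {ka : ℕ} (ha : #{j | fa * p j < phat j} ≤ ka) {B : ℝ} (hB : 0 ≤ B)
    (hphatB : ∀ j, phat j ≤ B) {Q : ℝ} (hQ : 1 ≤ Q) {c : Fin m}
    (hc : 2 * mLoad p σ c ≤ Q * B) (i : Fin m) : mLoad phat σ i ≤ Q * (fa + ka) * B := by
  have hka : (0 : ℝ) ≤ ka := ka.cast_nonneg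
  by_cases hi : #{j | σ j = i} ≤ 1
  · calc mLoad phat σ i ≤ B := mLoad_le_of_card_le_one hi hB hphatB
      _ ≤ Q * (fa + ka) * B :=
          le_mul_of_one_le_left hB (one_le_mul_of_one_le_of_one_le hQ (by linarith))
  · calc mLoad phat σ i ≤ ka * B + fa * mLoad p σ i :=
          mLoad_le_of_card_augmented_le (fun j => (hp j).le) (by linarith) ha hB hphatB σ i
      _ ≤ ka * B + fa * (Q * B) := by
          gcongr
          linarith [hσ.mLoad_le_two_mul hp (i := i) (by omega) c]
      _ ≤ Q * (fa + ka) * B := by nlinarith [mul_nonneg (mul_nonneg (sub_nonneg.2 hQ) hka) hB]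

end IsLexOpt

lemma add_le_one_add_ceil_div_mul (a : ℝ) {b : ℝ} (hb : 0 < b) : a + b ≤ (1 + ⌈a / b⌉₊) * b :=
  calc a + b = (1 + a / b) * b := by field_simp; ring
    _ ≤ (1 + ⌈a / b⌉₊) * b := by gcongr; exact Nat.le_ceil _

lemma cast_add_le_one_add_ceil_mul_one_add_ceil_mul {m kr : ℕ} (hkr : kr < m) (δ : ℕ) :
    ((m + δ : ℕ) : ℝ) ≤
      (1 + ⌈(kr : ℝ) / ((m : ℝ) - kr)⌉₊) * (1 + ⌈(δ : ℝ) / m⌉₊) * ((m : ℝ) - kr) := by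
  have hmkr : 0 < (m : ℝ) - kr := sub_pos.mpr (by exact_mod_cast hkr)
  have hm := add_le_one_add_ceil_div_mul (kr : ℝ) hmkr
  have hδ := add_le_one_add_ceil_div_mul (δ : ℝ) (hmkr.trans_le (by simp) : (0 : ℝ) < m)
  rw [add_sub_cancel] at hm
  push_cast
  calc (m + δ : ℝ) ≤ (1 + ⌈(δ : ℝ) / m⌉₊) * m := by linarith
    _ ≤ (1 + ⌈(δ : ℝ) / m⌉₊) * ((1 + ⌈(kr : ℝ) / ((m : ℝ) - kr)⌉₊) * ((m : ℝ) - kr)) := by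
        gcongr
    _ = _ := by ring

theorem stmt19_general (n m : ℕ) (p : Fin n → ℝ) (hp : ∀ j, 0 < p j)
    (σ : Fin n → Fin m) (hσ : IsLexOpt p σ)
    (fr fa : ℝ) (hfr : 1 ≤ fr) (hfa : 1 ≤ fa)
    (kr ka δ : ℕ) (hkr : kr < m)
    (phat : Fin n → ℝ) (h0 : ∀ j, 0 ≤ phat j)
    (hr : (Finset.univ.filter (fun j => phat j < p j / fr)).card ≤ kr)
    (ha : (Finset.univ.filter (fun j => fa * p j < phat j)).card ≤ ka) :
    makespan phat (fun j => Fin.castAdd δ (σ j)) ≤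
      2 * fr * (1 + (⌈(kr : ℝ) / ((m : ℝ) - kr)⌉₊ : ℝ)) * (fa + (ka : ℝ)) *
        (1 + (⌈(δ : ℝ) / (m : ℝ)⌉₊ : ℝ)) * optMakespan (m + δ) phat := by
  have : NeZero (m + δ) := ⟨by omega⟩
  set X : ℝ := (⌈(kr : ℝ) / ((m : ℝ) - kr)⌉₊ : ℝ)
  set Y : ℝ := (⌈(δ : ℝ) / (m : ℝ)⌉₊ : ℝ)
  set opt := optMakespan (m + δ) phat
  have hmkr : 0 < (m : ℝ) - kr := sub_pos.mpr (by exact_mod_cast hkr)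
  have hopt : 0 ≤ opt := optMakespan_nonneg h0
  have hQ : 1 ≤ 2 * fr * (1 + X) * (1 + Y) := by
    have : 1 ≤ (1 + X) * (1 + Y) := one_le_mul_of_one_le_of_one_le (by simp [X]) (by simp [Y])
    nlinarith
  obtain ⟨c, hc⟩ := exists_mul_mLoad_le_sum (fun j => (hp j).le) h0 (by linarith) hkr hr σ
  have hcopt : 2 * mLoad p σ c ≤ 2 * fr * (1 + X) * (1 + Y) * opt := by
    refine le_of_mul_le_mul_left ?_ hmkr
    calc ((m : ℝ) - kr) * (2 * mLoad p σ c) ≤ 2 * fr * ∑ j, phat j := by linarith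
      _ ≤ 2 * fr * ((m + δ : ℕ) * opt) := by gcongr; exact sum_le_mul_optMakespan phat
      _ ≤ 2 * fr * ((1 + X) * (1 + Y) * ((m : ℝ) - kr) * opt) := by
          gcongr
          exact cast_add_le_one_add_ceil_mul_one_add_ceil_mul hkr δ
      _ = ((m : ℝ) - kr) * (2 * fr * (1 + X) * (1 + Y) * opt) := by ring
  have hbound := hσ.mLoad_le_of_two_mul_mLoad_le hp hfa ha hopt (le_optMakespan h0) hQ hcopt
  refine (makespan_castAdd_le δ ((mLoad_nonneg h0 σ c).trans (hbound c)) hbound).trans_eq ?_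
  ring

/-- global recovery guarantee. Keeping a LexOpt assignment (leaving the `δ` new
machines empty) after reductions (≤ `k_r` unstable w.r.t. `f_r`), augmentations (≤ `k_a`
unstable w.r.t. `f_a`) and `δ` machine activations yields makespan at most
`2·f_r·(1 + ⌈k_r/(m-k_r)⌉)·(f_a + k_a)·(1 + ⌈δ/m⌉)·C*_max(m+δ, p̂)`. -/
theorem stmt19 (n m : ℕ) (hm : 2 ≤ m) (p : Fin n → ℝ) (hp : ∀ j, 0 < p j)
    (σ : Fin n → Fin m) (hσ : IsLexOpt p σ)
    (fr fa : ℝ) (hfr : 1 ≤ fr) (hfa : 1 ≤ fa)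
    (kr ka δ : ℕ) (hkr : kr < m)
    (phat : Fin n → ℝ) (h0 : ∀ j, 0 ≤ phat j)
    (hr : (Finset.univ.filter (fun j => phat j < p j / fr)).card ≤ kr)
    (ha : (Finset.univ.filter (fun j => fa * p j < phat j)).card ≤ ka) :
    makespan phat (fun j => Fin.castAdd δ (σ j)) ≤
      2 * fr * (1 + (⌈(kr : ℝ) / ((m : ℝ) - kr)⌉₊ : ℝ)) * (fa + (ka : ℝ)) *
        (1 + (⌈(δ : ℝ) / (m : ℝ)⌉₊ : ℝ)) * optMakespan (m + δ) phat :=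
  stmt19_general n m p hp σ hσ fr fa hfr hfa kr ka δ hkr phat h0 hr ha
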